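/- If V is a 2g-dimensional symplectic F_2-vector space, η ∈ V is nonzero, and ε ∈ V satisfies ⟨η,ε⟩ = 1, then the number of odd quadratic forms q on V (with polarity the symplectic form) satisfying q(η) = 0 equals 2^(g-1)(2^(g-1) - 1). -/

import Mathlib

/-!
In the coordinates `(x, y)` of the symplectic basis, the symplectic form is
`x ⬝ᵥ y' + y ⬝ᵥ x'` and a quadratic refinement `q` is determined by its values `c` on the basis:
`q = Q + c.1 ⬝ᵥ x + c.2 ⬝ᵥ y` with `Q (x, y) = x ⬝ᵥ y`. Its Arf invariant is `Q c`, and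
`q η = Q c + Q (c + v)`, where `v ≠ 0` is the coordinate vector of `η` with its halves swapped.
So we count the `c` with `Q c = Q (c + v) = 1`. Writing each indicator as `(1 - (-1) ^ Q) / 2`,
the count becomes a combination of the Gauss sum `∑ (-1) ^ Q c = 2 ^ g` (twice) and of the sum of
`(-1) ^ (Q c + Q (c + v))`, which vanishes because `Q c + Q (c + v) - Q v` is a nonzero linear form
in `c`; hence `4 N = 4 ^ g - 2 * 2 ^ g`.
-/

open Finset Module

def signChar : AddChar (ZMod 2) ℤ where
  toFun x := if x = 0 then 1 else -1
  map_zero_eq_one' := rfl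
  map_add_eq_mul' := by decide

lemma signChar_eq_one_iff (x : ZMod 2) : signChar x = 1 ↔ x = 0 := by
  revert x; decide

lemma one_sub_signChar_mul_one_sub_signChar (s t : ZMod 2) :
    (1 - signChar s) * (1 - signChar t) = if s = 1 ∧ t = 1 then 4 else 0 := by
  revert s t; decide

lemma dotProduct_add_add {ι R : Type*} [Fintype ι] [CommRing R] (x y s t : ι → R) :
    (x + s) ⬝ᵥ (y + t) = x ⬝ᵥ y + s ⬝ᵥ t + (x ⬝ᵥ t + s ⬝ᵥ y) := by
  simp only [add_dotProduct, dotProduct_add]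
  ring

section CharacterSums

variable {ι : Type*} [Fintype ι] [DecidableEq ι]

def dotProductChar (w : ι → ZMod 2) : AddChar (ι → ZMod 2) ℤ :=
  signChar.compAddMonoidHom (AddMonoidHom.mk' (· ⬝ᵥ w) fun x y => add_dotProduct x y w)

lemma sum_signChar_dotProduct (w : ι → ZMod 2) :
    ∑ x : ι → ZMod 2, signChar (x ⬝ᵥ w) = if w = 0 then 2 ^ Fintype.card ι else 0 := by
  have trivial_iff : dotProductChar w = 0 ↔ w = 0 := by
    refine ⟨fun h => funext fun i => ?_, fun h => ?_⟩
    · simpa [dotProductChar, signChar_eq_one_iff] using DFunLike.congr_fun h (Pi.single i 1)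
    · ext x
      simp [dotProductChar, h]
  have := AddChar.sum_eq_ite (dotProductChar w)
  simp only [trivial_iff, Fintype.card_fun, ZMod.card] at this
  exact_mod_cast this

lemma sum_signChar_dotProduct_self :
    ∑ p : (ι → ZMod 2) × (ι → ZMod 2), signChar (p.1 ⬝ᵥ p.2) = 2 ^ Fintype.card ι := by
  simp [Fintype.sum_prod_type_right, sum_signChar_dotProduct]

lemma sum_signChar_polar_eq_zero {v : (ι → ZMod 2) × (ι → ZMod 2)} (hv : v ≠ 0) :
    ∑ p : (ι → ZMod 2) × (ι → ZMod 2), signChar (p.1 ⬝ᵥ v.2 + v.1 ⬝ᵥ p.2) = 0 := by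
  simp_rw [AddChar.map_add_eq_mul, dotProduct_comm v.1]
  simp_rw [Fintype.sum_prod_type, ← Finset.sum_mul_sum, sum_signChar_dotProduct]
  have : ¬ (v.2 = 0 ∧ v.1 = 0) := fun h => hv (Prod.ext h.2 h.1)
  split_ifs <;> simp_all

lemma four_mul_card_odd_pairs {v : (ι → ZMod 2) × (ι → ZMod 2)} (hv : v ≠ 0) :
    4 * (Fintype.card {p : (ι → ZMod 2) × (ι → ZMod 2) //
        p.1 ⬝ᵥ p.2 = 1 ∧ (p + v).1 ⬝ᵥ (p + v).2 = 1} : ℤ) =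
      4 ^ Fintype.card ι - 2 * 2 ^ Fintype.card ι := by
  have polar (p : (ι → ZMod 2) × (ι → ZMod 2)) :
      p.1 ⬝ᵥ p.2 + (p + v).1 ⬝ᵥ (p + v).2 = v.1 ⬝ᵥ v.2 + (p.1 ⬝ᵥ v.2 + v.1 ⬝ᵥ p.2) := by
    rw [Prod.fst_add, Prod.snd_add, dotProduct_add_add]
    linear_combination (p.1 ⬝ᵥ p.2) * CharTwo.two_eq_zero (R := ZMod 2)
  have translate : ∑ p : (ι → ZMod 2) × (ι → ZMod 2), signChar ((p + v).1 ⬝ᵥ (p + v).2) =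
      2 ^ Fintype.card ι :=
    (Equiv.sum_comp (Equiv.addRight v) fun p => signChar (p.1 ⬝ᵥ p.2)).trans
      sum_signChar_dotProduct_self
  calc 4 * (Fintype.card {p : (ι → ZMod 2) × (ι → ZMod 2) //
        p.1 ⬝ᵥ p.2 = 1 ∧ (p + v).1 ⬝ᵥ (p + v).2 = 1} : ℤ)
      = ∑ p : (ι → ZMod 2) × (ι → ZMod 2),
          (1 - signChar (p.1 ⬝ᵥ p.2)) * (1 - signChar ((p + v).1 ⬝ᵥ (p + v).2)) := by
        simp only [one_sub_signChar_mul_one_sub_signChar, Fintype.card_subtype,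
          natCast_card_filter, mul_sum, mul_ite, mul_one, mul_zero]
    _ = ∑ p : (ι → ZMod 2) × (ι → ZMod 2), (1 - signChar (p.1 ⬝ᵥ p.2)
          - signChar ((p + v).1 ⬝ᵥ (p + v).2)
          + signChar (v.1 ⬝ᵥ v.2) * signChar (p.1 ⬝ᵥ v.2 + v.1 ⬝ᵥ p.2)) := by
        refine sum_congr rfl fun p _ => ?_
        rw [← AddChar.map_add_eq_mul, ← polar, AddChar.map_add_eq_mul]
        ring
    _ = 4 ^ Fintype.card ι - 2 * 2 ^ Fintype.card ι := by
        simp only [sum_add_distrib, sum_sub_distrib, ← mul_sum, sum_signChar_polar_eq_zero hv,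
          sum_signChar_dotProduct_self, translate]
        simp [Fintype.card_prod, ← mul_pow]
        ring

lemma card_odd_pairs {v : (ι → ZMod 2) × (ι → ZMod 2)} (hv : v ≠ 0) :
    Fintype.card {p : (ι → ZMod 2) × (ι → ZMod 2) //
        p.1 ⬝ᵥ p.2 = 1 ∧ (p + v).1 ⬝ᵥ (p + v).2 = 1} =
      2 ^ (Fintype.card ι - 1) * (2 ^ (Fintype.card ι - 1) - 1) := by
  have : Nonempty ι := by
    by_contra h
    rw [not_nonempty_iff] at h
    exact hv (Subsingleton.elim _ _)
  obtain ⟨m, hm⟩ := Nat.exists_eq_add_one_of_ne_zero (Fintype.card_ne_zero (α := ι))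
  have h := four_mul_card_odd_pairs hv
  rw [hm] at h ⊢
  have h4 : (4 : ℤ) ^ m = 2 ^ m * 2 ^ m := by rw [← mul_pow]; norm_num
  zify [Nat.one_le_two_pow, Nat.add_sub_cancel]
  refine mul_left_cancel₀ four_ne_zero (h.trans ?_)
  rw [pow_succ, pow_succ, h4]
  ring

end CharacterSums

section Refinement

variable {V : Type*} [AddCommGroup V] [Module (ZMod 2) V]

def IsQuadraticRefinement (B : V →ₗ[ZMod 2] V →ₗ[ZMod 2] ZMod 2) (q : V → ZMod 2) : Prop :=
  ∀ x y, q (x + y) = q x + q y + B x y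

lemma IsQuadraticRefinement.eq_of_basis {B : V →ₗ[ZMod 2] V →ₗ[ZMod 2] ZMod 2} {κ : Type*}
    {q q' : V → ZMod 2} (hq : IsQuadraticRefinement B q) (hq' : IsQuadraticRefinement B q')
    (b : Basis κ (ZMod 2) V) (h : ∀ j, q (b j) = q' (b j)) : q = q' := by
  let f : V →+ ZMod 2 := AddMonoidHom.mk' (q + q') fun x y => by
    simp only [Pi.add_apply, hq x y, hq' x y]
    linear_combination B x y * CharTwo.two_eq_zero (R := ZMod 2)
  have hf : f.toZModLinearMap 2 = 0 := b.ext fun j => CharTwo.add_eq_zero.mpr (h j)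
  funext x
  exact CharTwo.add_eq_zero.mp (LinearMap.congr_fun hf x)

end Refinement

section HyperbolicBasis

variable {ι R V : Type*} [Fintype ι] [CommRing R] [AddCommGroup V] [Module R V]

noncomputable def hyperbolicCoords (b : Basis (ι ⊕ ι) R V) : V ≃ₗ[R] (ι → R) × (ι → R) :=
  b.equivFun ≪≫ₗ LinearEquiv.sumArrowLequivProdArrow ι ι R R

lemma hyperbolicCoords_apply (b : Basis (ι ⊕ ι) R V) (x : V) :
    hyperbolicCoords b x = (fun i => b.repr x (.inl i), fun i => b.repr x (.inr i)) :=
  rfl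

variable [DecidableEq ι]

@[simp] lemma hyperbolicCoords_inl (b : Basis (ι ⊕ ι) R V) (i : ι) :
    hyperbolicCoords b (b (.inl i)) = (Pi.single i 1, 0) := by
  ext j <;> simp [hyperbolicCoords_apply, Finsupp.single_apply, Pi.single_apply, eq_comm]

@[simp] lemma hyperbolicCoords_inr (b : Basis (ι ⊕ ι) R V) (i : ι) :
    hyperbolicCoords b (b (.inr i)) = (0, Pi.single i 1) := by
  ext j <;> simp [hyperbolicCoords_apply, Finsupp.single_apply, Pi.single_apply, eq_comm]

def IsHyperbolicBasis (B : V →ₗ[R] V →ₗ[R] R) (b : Basis (ι ⊕ ι) R V) : Prop :=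
  (∀ i j, B (b (.inl i)) (b (.inr j)) = if i = j then 1 else 0) ∧
  (∀ i j, B (b (.inl i)) (b (.inl j)) = 0) ∧
  (∀ i j, B (b (.inr i)) (b (.inr j)) = 0) ∧
  (∀ i j, B (b (.inr i)) (b (.inl j)) = if i = j then 1 else 0)

lemma IsHyperbolicBasis.apply_eq {B : V →ₗ[R] V →ₗ[R] R} {b : Basis (ι ⊕ ι) R V}
    (hb : IsHyperbolicBasis B b) (x y : V) :
    B x y = (hyperbolicCoords b x).1 ⬝ᵥ (hyperbolicCoords b y).2 +
      (hyperbolicCoords b x).2 ⬝ᵥ (hyperbolicCoords b y).1 := by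
  obtain ⟨hef, hee, hff, hfe⟩ := hb
  let ω : (ι → R) × (ι → R) →ₗ[R] (ι → R) × (ι → R) →ₗ[R] R :=
    (dotProductBilin R R).compl₁₂ (LinearMap.fst R _ _) (LinearMap.snd R _ _) +
      (dotProductBilin R R).compl₁₂ (LinearMap.snd R _ _) (LinearMap.fst R _ _)
  have : B = ω.compl₁₂ (hyperbolicCoords b).toLinearMap (hyperbolicCoords b).toLinearMap := by
    refine LinearMap.ext_basis b b ?_
    rintro (i | i) (j | j) <;> simp [ω, hef, hee, hff, hfe, Pi.single_apply, eq_comm]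
  rw [this]
  rfl

end HyperbolicBasis

section HyperbolicRefinement

variable {ι V : Type*} [Fintype ι] [AddCommGroup V] [Module (ZMod 2) V]
  {B : V →ₗ[ZMod 2] V →ₗ[ZMod 2] ZMod 2} {b : Basis (ι ⊕ ι) (ZMod 2) V}

variable (b) in
noncomputable def hyperbolicRefinement (c : (ι → ZMod 2) × (ι → ZMod 2)) (x : V) : ZMod 2 :=
  (hyperbolicCoords b x).1 ⬝ᵥ (hyperbolicCoords b x).2 + c.1 ⬝ᵥ (hyperbolicCoords b x).1 +
    c.2 ⬝ᵥ (hyperbolicCoords b x).2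

lemma hyperbolicRefinement_apply (c : (ι → ZMod 2) × (ι → ZMod 2)) (x : V) :
    hyperbolicRefinement b c x =
      c.1 ⬝ᵥ c.2 + (c + (hyperbolicCoords b x).swap).1 ⬝ᵥ (c + (hyperbolicCoords b x).swap).2 := by
  simp only [hyperbolicRefinement, Prod.fst_add, Prod.snd_add, Prod.fst_swap, Prod.snd_swap,
    dotProduct_add, add_dotProduct, dotProduct_comm (hyperbolicCoords b x).2]
  linear_combination -(c.1 ⬝ᵥ c.2) * CharTwo.two_eq_zero (R := ZMod 2)

variable [DecidableEq ι]

lemma isQuadraticRefinement_hyperbolicRefinement (hb : IsHyperbolicBasis B b)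
    (c : (ι → ZMod 2) × (ι → ZMod 2)) : IsQuadraticRefinement B (hyperbolicRefinement b c) := by
  intro x y
  simp only [hyperbolicRefinement, hb.apply_eq, map_add, Prod.fst_add, Prod.snd_add,
    dotProduct_add, add_dotProduct, dotProduct_comm (hyperbolicCoords b y).1]
  ring

@[simp] lemma hyperbolicRefinement_inl (c : (ι → ZMod 2) × (ι → ZMod 2)) (i : ι) :
    hyperbolicRefinement b c (b (.inl i)) = c.1 i := by
  simp [hyperbolicRefinement]

@[simp] lemma hyperbolicRefinement_inr (c : (ι → ZMod 2) × (ι → ZMod 2)) (i : ι) :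
    hyperbolicRefinement b c (b (.inr i)) = c.2 i := by
  simp [hyperbolicRefinement]

lemma IsQuadraticRefinement.eq_hyperbolicRefinement {q : V → ZMod 2}
    (hq : IsQuadraticRefinement B q) (hb : IsHyperbolicBasis B b) :
    q = hyperbolicRefinement b (fun i => q (b (.inl i)), fun i => q (b (.inr i))) :=
  hq.eq_of_basis (isQuadraticRefinement_hyperbolicRefinement hb _) b (by rintro (i | i) <;> simp)

noncomputable def refinementEquiv (hb : IsHyperbolicBasis B b) :
    {q : V → ZMod 2 // IsQuadraticRefinement B q} ≃ (ι → ZMod 2) × (ι → ZMod 2) where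
  toFun q := (fun i => q.1 (b (.inl i)), fun i => q.1 (b (.inr i)))
  invFun c := ⟨hyperbolicRefinement b c, isQuadraticRefinement_hyperbolicRefinement hb c⟩
  left_inv q := Subtype.ext (q.2.eq_hyperbolicRefinement hb).symm
  right_inv c := by ext i <;> simp

lemma card_odd_refinements_vanishing (hb : IsHyperbolicBasis B b) (η : V) :
    Nat.card {q : V → ZMod 2 // IsQuadraticRefinement B q ∧
        ∑ i, q (b (.inl i)) * q (b (.inr i)) = 1 ∧ q η = 0} =
      Fintype.card {c : (ι → ZMod 2) × (ι → ZMod 2) // c.1 ⬝ᵥ c.2 = 1 ∧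
        (c + (hyperbolicCoords b η).swap).1 ⬝ᵥ (c + (hyperbolicCoords b η).swap).2 = 1} := by
  rw [← Nat.card_eq_fintype_card]
  refine Nat.card_congr <| (Equiv.subtypeSubtypeEquivSubtypeInter _ _).symm.trans <|
    (refinementEquiv hb).subtypeEquiv fun q => ?_
  have hη := congr_fun (q.2.eq_hyperbolicRefinement hb) η
  rw [hyperbolicRefinement_apply] at hη
  have odd_and_vanishing_iff : ∀ s t : ZMod 2, s = 1 ∧ s + t = 0 ↔ s = 1 ∧ t = 1 := by decide
  rw [hη]
  exact odd_and_vanishing_iff _ _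

end HyperbolicRefinement

theorem stmt2_general (g : ℕ) (V : Type*) [AddCommGroup V] [Module (ZMod 2) V]
    (B : V →ₗ[ZMod 2] V →ₗ[ZMod 2] ZMod 2)
    (b : Module.Basis (Fin g ⊕ Fin g) (ZMod 2) V)
    (hef : ∀ i j, B (b (Sum.inl i)) (b (Sum.inr j)) = if i = j then 1 else 0)
    (hee : ∀ i j, B (b (Sum.inl i)) (b (Sum.inl j)) = 0)
    (hff : ∀ i j, B (b (Sum.inr i)) (b (Sum.inr j)) = 0)
    (hfe : ∀ i j, B (b (Sum.inr i)) (b (Sum.inl j)) = if i = j then 1 else 0)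
    (η : V) (hη : η ≠ 0) :
    Nat.card {q : V → ZMod 2 // (∀ x y, q (x + y) = q x + q y + B x y) ∧
        ∑ i : Fin g, q (b (Sum.inl i)) * q (b (Sum.inr i)) = 1 ∧ q η = 0} =
      2 ^ (g - 1) * (2 ^ (g - 1) - 1) := by
  have hb : IsHyperbolicBasis B b := ⟨hef, hee, hff, hfe⟩
  have hv : (hyperbolicCoords b η).swap ≠ 0 :=
    Prod.swap_injective.ne ((hyperbolicCoords b).map_ne_zero_iff.mpr hη)
  calc _ = _ := card_odd_refinements_vanishing hb η
    _ = _ := by rw [card_odd_pairs hv, Fintype.card_fin]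

/-- Let `V` be a `2g`-dimensional symplectic `F₂`-vector space (with a symplectic
basis), let `η ∈ V` be nonzero and `ε ∈ V` with `⟨η,ε⟩ = 1`. Then the number of odd quadratic
forms `q` on `V` with polarity the symplectic form (i.e. with Arf invariant `1`) satisfying
`q(η) = 0` equals `2^(g-1) * (2^(g-1) - 1)`. -/
theorem stmt2 (g : ℕ) (hg : 1 ≤ g) (V : Type*) [AddCommGroup V] [Module (ZMod 2) V]
    (B : V →ₗ[ZMod 2] V →ₗ[ZMod 2] ZMod 2)
    (b : Module.Basis (Fin g ⊕ Fin g) (ZMod 2) V)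
    (hef : ∀ i j, B (b (Sum.inl i)) (b (Sum.inr j)) = if i = j then 1 else 0)
    (hee : ∀ i j, B (b (Sum.inl i)) (b (Sum.inl j)) = 0)
    (hff : ∀ i j, B (b (Sum.inr i)) (b (Sum.inr j)) = 0)
    (hfe : ∀ i j, B (b (Sum.inr i)) (b (Sum.inl j)) = if i = j then 1 else 0)
    (η ε : V) (hη : η ≠ 0) (hηε : B η ε = 1) :
    Nat.card {q : V → ZMod 2 // (∀ x y, q (x + y) = q x + q y + B x y) ∧
        ∑ i : Fin g, q (b (Sum.inl i)) * q (b (Sum.inr i)) = 1 ∧ q η = 0} =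
      2 ^ (g - 1) * (2 ^ (g - 1) - 1) :=
  stmt2_general g V B b hef hee hff hfe η hη
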